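/- arXiv:1112.2068 — 2 statements merged into one kernel-verified Lean document; each statement's English description precedes it below -/
import Mathlib

section
/- Let G₁ have order n₁ and G₂ have order n₂ and minimum degree δ₂. Then φ_k^o(G₁ □ G₂) ≥ n₂ · φ_{k+δ₂}^o(G₁), where φ_k^o(G) denotes the maximum cardinality of an offensive k-alliance free set in G. -/
open Classical

/-- Number of neighbors of `v` inside `S`. -/
noncomputable def dS {V : Type*} (G : SimpleGraph V) (S : Set V) (v : V) : ℕ :=
  {u ∈ S | G.Adj v u}.ncard

/-- `S` is a defensive `k`-alliance. -/
def IsDefAlliance {V : Type*} (G : SimpleGraph V) (k : ℤ) (S : Set V) : Prop :=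
  S.Nonempty ∧ ∀ v ∈ S, (dS G S v : ℤ) ≥ (dS G Sᶜ v : ℤ) + k

/-- `X` is a defensive `k`-alliance free set. -/
def IsDafFree {V : Type*} (G : SimpleGraph V) (k : ℤ) (X : Set V) : Prop :=
  ∀ S : Set V, S ⊆ X → ¬ IsDefAlliance G k S

/-- Boundary: vertices outside `S` with a neighbor in `S`. -/
def obdry {V : Type*} (G : SimpleGraph V) (S : Set V) : Set V :=
  {v | v ∉ S ∧ ∃ u ∈ S, G.Adj v u}

/-- `S` is an offensive `k`-alliance. -/
def IsOffAlliance {V : Type*} (G : SimpleGraph V) (k : ℤ) (S : Set V) : Prop :=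
  S.Nonempty ∧ ∀ v ∈ obdry G S, (dS G S v : ℤ) ≥ (dS G Sᶜ v : ℤ) + k

/-- `X` is an offensive `k`-alliance free set. -/
def IsOafFree {V : Type*} (G : SimpleGraph V) (k : ℤ) (X : Set V) : Prop :=
  ∀ S : Set V, S ⊆ X → ¬ IsOffAlliance G k S

/-- `S` is a powerful `k`-alliance. -/
def IsPowAlliance {V : Type*} (G : SimpleGraph V) (k : ℤ) (S : Set V) : Prop :=
  IsDefAlliance G k S ∧ IsOffAlliance G (k + 2) S

/-- `X` is a powerful `k`-alliance free set. -/
def IsPafFree {V : Type*} (G : SimpleGraph V) (k : ℤ) (X : Set V) : Prop :=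
  ∀ S : Set V, S ⊆ X → ¬ IsPowAlliance G k S

/-- Maximum cardinality of a defensive `k`-alliance free set. -/
noncomputable def phiD {V : Type*} (G : SimpleGraph V) (k : ℤ) : ℕ :=
  sSup {n : ℕ | ∃ X : Set V, IsDafFree G k X ∧ X.ncard = n}

/-- Maximum cardinality of an offensive `k`-alliance free set. -/
noncomputable def phiO {V : Type*} (G : SimpleGraph V) (k : ℤ) : ℕ :=
  sSup {n : ℕ | ∃ X : Set V, IsOafFree G k X ∧ X.ncard = n}

/-- Maximum cardinality of a powerful `k`-alliance free set. -/
noncomputable def phiP {V : Type*} (G : SimpleGraph V) (k : ℤ) : ℕ :=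
  sSup {n : ℕ | ∃ X : Set V, IsPafFree G k X ∧ X.ncard = n}

/-!
Take a maximum offensive `(k + δ₂)`-alliance free set `X` of `G₁` and lift it to the union of
`G₂`-fibres `X × V₂`. If `S` were an offensive `k`-alliance inside it, its shadow `Y = π₁ S`
would be one of `G₁` of strength `k + δ₂`: for a boundary vertex `v` of `Y` with a neighbour
`(u, b) ∈ S`, the vertex `(v, b)` lies on the boundary of `S`, it has no more neighbours in `S`
than `v` has in `Y`, and besides the `(a, b)` with `a ∉ Y` it has the whole `G₂`-neighbourhood
`{v} × N(b)` outside `S`, i.e. at least `δ₂` extra neighbours outside.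
-/

open SimpleGraph

section AllianceFree

variable {V : Type*} (G : SimpleGraph V) (k : ℤ)

lemma isOafFree_empty : IsOafFree G k ∅ := fun _ hS hoff =>
  hoff.1.ne_empty (Set.subset_empty_iff.mp hS)

lemma bddAbove_ncard_isOafFree [Finite V] :
    BddAbove {n : ℕ | ∃ X : Set V, IsOafFree G k X ∧ X.ncard = n} :=
  ⟨Nat.card V, by rintro _ ⟨X, -, rfl⟩; exact Set.ncard_le_card X⟩

lemma exists_isOafFree_ncard_eq_phiO [Finite V] :
    ∃ X : Set V, IsOafFree G k X ∧ X.ncard = phiO G k := by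
  apply Nat.sSup_mem _ (bddAbove_ncard_isOafFree G k)
  exact ⟨0, ∅, isOafFree_empty G k, Set.ncard_empty V⟩

variable {G k}

lemma IsOafFree.ncard_le_phiO [Finite V] {X : Set V} (hX : IsOafFree G k X) :
    X.ncard ≤ phiO G k :=
  le_csSup (bddAbove_ncard_isOafFree G k) ⟨X, hX, rfl⟩

end AllianceFree

section BoxProd

variable {V₁ V₂ : Type*} {G₁ : SimpleGraph V₁} {G₂ : SimpleGraph V₂}
  {S : Set (V₁ × V₂)} {v : V₁}

lemma dS_boxProd_le_dS_image_fst [Finite V₁] (hv : v ∉ Prod.fst '' S) (b : V₂) :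
    dS (G₁ □ G₂) S (v, b) ≤ dS G₁ (Prod.fst '' S) v := by
  have hfibre : ∀ {a w}, (a, w) ∈ S → (G₁ □ G₂).Adj (v, b) (a, w) → G₁.Adj v a ∧ b = w := by
    intro a w hS hadj
    rcases boxProd_adj.mp hadj with h | ⟨-, rfl⟩
    · exact h
    · exact absurd ⟨_, hS, rfl⟩ hv
  apply Set.ncard_le_ncard_of_injOn Prod.fst
  · rintro ⟨a, w⟩ ⟨hS, hadj⟩
    exact ⟨⟨_, hS, rfl⟩, (hfibre hS hadj).1⟩
  · rintro ⟨a, w⟩ ⟨hS, hadj⟩ ⟨a', w'⟩ ⟨hS', hadj'⟩ (rfl : a = a')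
    rw [← (hfibre hS hadj).2, ← (hfibre hS' hadj').2]

lemma dS_compl_image_fst_add_degree_le_dS_boxProd [Finite V₁] [Fintype V₂]
    [DecidableRel G₂.Adj] (hv : v ∉ Prod.fst '' S) (b : V₂) :
    dS G₁ (Prod.fst '' S)ᶜ v + G₂.degree b ≤ dS (G₁ □ G₂) Sᶜ (v, b) := by
  set horizontal := (fun a => (a, b)) '' {a ∈ (Prod.fst '' S)ᶜ | G₁.Adj v a}
  set vertical := (fun w => (v, w)) '' G₂.neighborSet b
  have hdisj : Disjoint horizontal vertical := by
    rw [Set.disjoint_left]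
    rintro _ ⟨a, ⟨-, hva⟩, rfl⟩ ⟨w, -, hw⟩
    cases hw
    exact G₁.irrefl hva
  have hsub : horizontal ∪ vertical ⊆ {p ∈ Sᶜ | (G₁ □ G₂).Adj (v, b) p} := by
    rintro _ (⟨a, ⟨ha, hva⟩, rfl⟩ | ⟨w, hw, rfl⟩)
    · exact ⟨fun hS => ha ⟨_, hS, rfl⟩, boxProd_adj.mpr (Or.inl ⟨hva, rfl⟩)⟩
    · exact ⟨fun hS => hv ⟨_, hS, rfl⟩, boxProd_adj.mpr (Or.inr ⟨hw, rfl⟩)⟩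
  calc dS G₁ (Prod.fst '' S)ᶜ v + G₂.degree b = horizontal.ncard + vertical.ncard := by
        rw [Set.ncard_image_of_injective _ (Prod.mk_left_injective b),
          Set.ncard_image_of_injective _ (Prod.mk_right_injective v),
          Set.ncard_eq_toFinset_card' (G₂.neighborSet b), Set.toFinset_card,
          card_neighborSet_eq_degree]
        rfl
    _ = (horizontal ∪ vertical).ncard := (Set.ncard_union_eq hdisj).symm
    _ ≤ dS (G₁ □ G₂) Sᶜ (v, b) := Set.ncard_le_ncard hsub

lemma IsOffAlliance.image_fst [Finite V₁] [Fintype V₂] [DecidableRel G₂.Adj] {k : ℤ}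
    (hS : IsOffAlliance (G₁ □ G₂) k S) :
    IsOffAlliance G₁ (k + G₂.minDegree) (Prod.fst '' S) := by
  refine ⟨hS.1.image _, ?_⟩
  rintro v ⟨hv, _, ⟨⟨u, b⟩, hub, rfl⟩, hvu⟩
  have hboundary : (v, b) ∈ obdry (G₁ □ G₂) S :=
    ⟨fun hvb => hv ⟨_, hvb, rfl⟩, _, hub, boxProd_adj.mpr (Or.inl ⟨hvu, rfl⟩)⟩
  have hinside := dS_boxProd_le_dS_image_fst (G₁ := G₁) (G₂ := G₂) hv b
  have houtside := dS_compl_image_fst_add_degree_le_dS_boxProd (G₁ := G₁) (G₂ := G₂) hv b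
  have hmin := minDegree_le_degree G₂ b
  have := hS.2 _ hboundary
  omega

lemma IsOafFree.prod_univ [Finite V₁] [Fintype V₂] [DecidableRel G₂.Adj] {k : ℤ} {X : Set V₁}
    (hX : IsOafFree G₁ (k + G₂.minDegree) X) :
    IsOafFree (G₁ □ G₂) k (X ×ˢ Set.univ) := fun _ hS hoff =>
  hX _ (by rintro _ ⟨_, hp, rfl⟩; exact (hS hp).1) hoff.image_fst

end BoxProd

theorem stmt14_general {V₁ V₂ : Type*} [Fintype V₁] [Fintype V₂]
    (G₁ : SimpleGraph V₁) (G₂ : SimpleGraph V₂) [DecidableRel G₂.Adj] (k : ℤ) :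
    phiO (G₁.boxProd G₂) k ≥ Fintype.card V₂ * phiO G₁ (k + (G₂.minDegree : ℤ)) := by
  obtain ⟨X, hXfree, hXcard⟩ := exists_isOafFree_ncard_eq_phiO G₁ (k + G₂.minDegree)
  have hlift := (hXfree.prod_univ (G₂ := G₂)).ncard_le_phiO
  rwa [Set.ncard_prod, Set.ncard_univ, Nat.card_eq_fintype_card, hXcard, mul_comm] at hlift

theorem stmt14 {V₁ V₂ : Type*} [Fintype V₁] [Fintype V₂] [Nonempty V₂]
    (G₁ : SimpleGraph V₁) (G₂ : SimpleGraph V₂) [DecidableRel G₂.Adj] (k : ℤ) :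
    phiO (G₁.boxProd G₂) k ≥ Fintype.card V₂ * phiO G₁ (k + (G₂.minDegree : ℤ)) :=
  stmt14_general G₁ G₂ k
end

section
/- Let G₁, G₂ be graphs with maximum degrees Δ₁, Δ₂ and minimum degrees δ₁, δ₂. If S₁ is an offensive k₁-alliance free set in G₁ and S₂ is an offensive k₂-alliance free set in G₂, then (S₁ × V₂) ∪ (V₁ × S₂) is an offensive k-alliance free set in G₁ □ G₂ for every k ≥ max{k₁ − δ₂, k₂ − δ₁, min{k₂ + Δ₁, k₁ + Δ₂}}. -/
open Classical

/-!
Let `S ⊆ (S₁ × V₂) ∪ (V₁ × S₂)` be an offensive `k`-alliance of `G₁ □ G₂`. The `S`-neighbours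
of a vertex `(a, b)` split into those in its `G₁`-row and those in its `G₂`-column. If some `a ∉ S₁`
has a nonempty fibre `{y | (a, y) ∈ S} ⊆ S₂`, that fibre is an offensive `(k - Δ₁)`-alliance
of `G₂`, since the row contributes at most `Δ₁`. Otherwise the projection of `S` to `V₁` lies
in `S₁`, and it is an offensive `(k + δ₂)`-alliance of `G₁`: a boundary vertex `x` of the
projection has an empty fibre, so the whole column of `(x, y)`, at least `δ₂` vertices,
lies outside `S`. Either way `k ≥ max (k₁ - δ₂) (k₂ + Δ₁)` contradicts freeness; the bound
`max (k₂ - δ₁) (k₁ + Δ₂)` is the same argument with the factors swapped.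
-/

open SimpleGraph

open scoped SimpleGraph

section dS

variable {V : Type*} (G : SimpleGraph V)

lemma dS_mono [Finite V] {S T : Set V} (h : S ⊆ T) (v : V) : dS G S v ≤ dS G T v :=
  Set.ncard_le_ncard fun _ hu => ⟨h hu.1, hu.2⟩

lemma dS_univ [Fintype V] [DecidableRel G.Adj] (v : V) : dS G Set.univ v = G.degree v := by
  rw [dS, ← card_neighborFinset_eq_degree, ← Set.ncard_coe_finset, coe_neighborFinset]
  simp [neighborSet]

lemma dS_le_maxDegree [Fintype V] [DecidableRel G.Adj] (S : Set V) (v : V) :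
    dS G S v ≤ G.maxDegree :=
  calc dS G S v ≤ dS G Set.univ v := dS_mono G (Set.subset_univ S) v
    _ = G.degree v := dS_univ G v
    _ ≤ G.maxDegree := G.degree_le_maxDegree v

lemma dS_iso {W : Type*} {G' : SimpleGraph W} (e : G ≃g G') (S : Set W) (v : V) :
    dS G (e ⁻¹' S) v = dS G' S (e v) := by
  have : {u ∈ S | G'.Adj (e v) u} = e '' {u ∈ e ⁻¹' S | G.Adj v u} := by
    ext w
    obtain ⟨u, rfl⟩ := e.surjective w
    simp [e.map_adj_iff]
  rw [dS, dS, this, Set.ncard_image_of_injective _ e.injective]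

end dS

section Alliance

variable {V : Type*} {G : SimpleGraph V} {k : ℤ}

lemma IsOffAlliance.mono {k' : ℤ} {S : Set V} (h : IsOffAlliance G k S) (hk : k' ≤ k) :
    IsOffAlliance G k' S :=
  ⟨h.1, fun v hv => (h.2 v hv).trans' (by linarith)⟩

lemma IsOafFree.mono {k' : ℤ} {X : Set V} (h : IsOafFree G k X) (hk : k ≤ k') :
    IsOafFree G k' X :=
  fun S hS hA => h S hS (hA.mono hk)

lemma IsOffAlliance.comap_iso {W : Type*} {G' : SimpleGraph W} (e : G ≃g G') {S : Set W}
    (h : IsOffAlliance G' k S) : IsOffAlliance G k (e ⁻¹' S) := by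
  refine ⟨h.1.preimage e.surjective, fun v ⟨hvS, u, huS, hvu⟩ => ?_⟩
  have hv : e v ∈ obdry G' S := ⟨hvS, e u, huS, e.map_rel_iff.mpr hvu⟩
  rw [← Set.preimage_compl, dS_iso, dS_iso]
  exact h.2 _ hv

lemma IsOafFree.of_iso {W : Type*} {G' : SimpleGraph W} (e : G ≃g G') {X : Set W}
    (h : IsOafFree G k (e ⁻¹' X)) : IsOafFree G' k X :=
  fun S hS hA => h (e ⁻¹' S) (Set.preimage_mono hS) (hA.comap_iso e)

end Alliance

section BoxProd

variable {V₁ V₂ : Type*} (G₁ : SimpleGraph V₁) (G₂ : SimpleGraph V₂)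

lemma dS_boxProd [Finite V₁] [Finite V₂] (S : Set (V₁ × V₂)) (a : V₁) (b : V₂) :
    dS (G₁ □ G₂) S (a, b) = dS G₁ {x | (x, b) ∈ S} a + dS G₂ {y | (a, y) ∈ S} b := by
  have hsplit : {u ∈ S | (G₁ □ G₂).Adj (a, b) u} =
      (fun x => (x, b)) '' {x ∈ {x | (x, b) ∈ S} | G₁.Adj a x} ∪
      (fun y => (a, y)) '' {y ∈ {y | (a, y) ∈ S} | G₂.Adj b y} := by
    ext ⟨x, y⟩
    simp only [boxProd_adj, Set.mem_union, Set.mem_image, Set.mem_ofPred_eq, Prod.mk.injEq]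
    constructor
    · rintro ⟨hxy, ⟨hax, rfl⟩ | ⟨hby, rfl⟩⟩
      exacts [Or.inl ⟨x, ⟨hxy, hax⟩, rfl, rfl⟩, Or.inr ⟨y, ⟨hxy, hby⟩, rfl, rfl⟩]
    · rintro (⟨x, ⟨hxy, hax⟩, rfl, rfl⟩ | ⟨y, ⟨hxy, hby⟩, rfl, rfl⟩)
      exacts [⟨hxy, Or.inl ⟨hax, rfl⟩⟩, ⟨hxy, Or.inr ⟨hby, rfl⟩⟩]
  have hdisj : Disjoint ((fun x => (x, b)) '' {x ∈ {x | (x, b) ∈ S} | G₁.Adj a x})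
      ((fun y => (a, y)) '' {y ∈ {y | (a, y) ∈ S} | G₂.Adj b y}) := by
    rw [Set.disjoint_left]
    rintro _ ⟨x, ⟨-, hax⟩, rfl⟩ ⟨y, -, hy⟩
    cases (Prod.mk.injEq .. ▸ hy).1
    exact G₁.irrefl hax
  rw [dS, hsplit, Set.ncard_union_eq hdisj,
    Set.ncard_image_of_injective _ (Prod.mk_left_injective b),
    Set.ncard_image_of_injective _ (Prod.mk_right_injective a)]
  rfl

variable [Fintype V₁] [Fintype V₂] {k : ℤ} {S : Set (V₁ × V₂)}

lemma IsOffAlliance.fiber_boxProd [DecidableRel G₁.Adj] (hS : IsOffAlliance (G₁ □ G₂) k S)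
    {a : V₁} (ha : {y | (a, y) ∈ S}.Nonempty) :
    IsOffAlliance G₂ (k - G₁.maxDegree) {y | (a, y) ∈ S} := by
  refine ⟨ha, fun y ⟨hyS, y', hy'S, hyy'⟩ => ?_⟩
  have hay : (a, y) ∈ obdry (G₁ □ G₂) S := ⟨hyS, (a, y'), hy'S, Or.inr ⟨hyy', rfl⟩⟩
  have hall := hS.2 _ hay
  rw [dS_boxProd, dS_boxProd, show {y' | (a, y') ∈ Sᶜ} = {y' | (a, y') ∈ S}ᶜ from rfl] at hall
  have hrow : dS G₁ {x | (x, y) ∈ S} a ≤ G₁.maxDegree := dS_le_maxDegree G₁ _ a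
  push_cast at hall
  omega

lemma IsOffAlliance.image_fst_boxProd [DecidableRel G₂.Adj]
    (hS : IsOffAlliance (G₁ □ G₂) k S) : IsOffAlliance G₁ (k + G₂.minDegree) (Prod.fst '' S) := by
  refine ⟨hS.1.image _, ?_⟩
  rintro x ⟨hxP, _, ⟨⟨a, y⟩, hayS, rfl⟩, hxa⟩
  have hxfib : ∀ y', (x, y') ∉ S := fun y' h => hxP ⟨_, h, rfl⟩
  have hxy : (x, y) ∈ obdry (G₁ □ G₂) S := ⟨hxfib y, (a, y), hayS, Or.inl ⟨hxa, rfl⟩⟩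
  have hall := hS.2 _ hxy
  rw [dS_boxProd, dS_boxProd] at hall
  have hcolS : {y' | (x, y') ∈ S} = ∅ := Set.eq_empty_of_forall_notMem hxfib
  have hcolSc : {y' | (x, y') ∈ Sᶜ} = Set.univ := Set.eq_univ_of_forall hxfib
  have hrowS : dS G₁ {x' | (x', y) ∈ S} x ≤ dS G₁ (Prod.fst '' S) x :=
    dS_mono G₁ (T := Prod.fst '' S) (fun _ h => ⟨_, h, rfl⟩) x
  have hrowSc : dS G₁ (Prod.fst '' S)ᶜ x ≤ dS G₁ {x' | (x', y) ∈ Sᶜ} x :=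
    dS_mono G₁ (S := (Prod.fst '' S)ᶜ) (T := {x' | (x', y) ∈ Sᶜ})
      (fun _ h h' => h ⟨_, h', rfl⟩) x
  have hdeg := G₂.minDegree_le_degree y
  rw [hcolS, hcolSc, dS_univ, show dS G₂ ∅ y = 0 by simp [dS]] at hall
  push_cast at hall
  omega

lemma isOafFree_boxProd_of_le [DecidableRel G₁.Adj] [DecidableRel G₂.Adj] {k₁ k₂ : ℤ}
    {S₁ : Set V₁} {S₂ : Set V₂} (h₁ : IsOafFree G₁ k₁ S₁) (h₂ : IsOafFree G₂ k₂ S₂)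
    (hk₁ : k₁ - G₂.minDegree ≤ k) (hk₂ : k₂ + G₁.maxDegree ≤ k) :
    IsOafFree (G₁ □ G₂) k (S₁ ×ˢ Set.univ ∪ Set.univ ×ˢ S₂) := by
  intro S hSX hS
  by_cases hproj : Prod.fst '' S ⊆ S₁
  · exact h₁.mono (by omega) _ hproj (hS.image_fst_boxProd G₁ G₂)
  · obtain ⟨_, ⟨⟨a, y⟩, hayS, rfl⟩, haS₁⟩ := Set.not_subset.mp hproj
    have hfib : {y | (a, y) ∈ S} ⊆ S₂ := fun y' h =>
      ((hSX h).resolve_left fun h' => haS₁ h'.1).2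
    exact h₂.mono (by omega) _ hfib (hS.fiber_boxProd G₁ G₂ ⟨y, hayS⟩)

end BoxProd

theorem stmt15_general {V₁ V₂ : Type*} [Fintype V₁] [Fintype V₂]
    (G₁ : SimpleGraph V₁) (G₂ : SimpleGraph V₂)
    [DecidableRel G₁.Adj] [DecidableRel G₂.Adj]
    (k₁ k₂ k : ℤ) (S₁ : Set V₁) (S₂ : Set V₂)
    (h₁ : IsOafFree G₁ k₁ S₁) (h₂ : IsOafFree G₂ k₂ S₂)
    (hk : max (k₁ - (G₂.minDegree : ℤ)) (max (k₂ - (G₁.minDegree : ℤ))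
      (min (k₂ + (G₁.maxDegree : ℤ)) (k₁ + (G₂.maxDegree : ℤ)))) ≤ k) :
    IsOafFree (G₁.boxProd G₂) k
      ((S₁ ×ˢ (Set.univ : Set V₂)) ∪ ((Set.univ : Set V₁) ×ˢ S₂)) := by
  simp only [max_le_iff, min_le_iff] at hk
  obtain ⟨hk₁, hk₂, hk₂₁ | hk₁₂⟩ := hk
  · exact isOafFree_boxProd_of_le G₁ G₂ h₁ h₂ hk₁ hk₂₁
  · refine IsOafFree.of_iso (boxProdComm G₂ G₁) ?_
    have hX : boxProdComm G₂ G₁ ⁻¹' (S₁ ×ˢ Set.univ ∪ Set.univ ×ˢ S₂) =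
        S₂ ×ˢ Set.univ ∪ Set.univ ×ˢ S₁ := by
      ext ⟨b, a⟩
      change (a, b) ∈ S₁ ×ˢ Set.univ ∪ Set.univ ×ˢ S₂ ↔ _
      simp [or_comm]
    rw [hX]
    exact isOafFree_boxProd_of_le G₂ G₁ h₂ h₁ hk₂ hk₁₂

theorem stmt15 {V₁ V₂ : Type*} [Fintype V₁] [Fintype V₂] [Nonempty V₁] [Nonempty V₂]
    (G₁ : SimpleGraph V₁) (G₂ : SimpleGraph V₂)
    [DecidableRel G₁.Adj] [DecidableRel G₂.Adj]
    (k₁ k₂ k : ℤ) (S₁ : Set V₁) (S₂ : Set V₂)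
    (h₁ : IsOafFree G₁ k₁ S₁) (h₂ : IsOafFree G₂ k₂ S₂)
    (hk : max (k₁ - (G₂.minDegree : ℤ)) (max (k₂ - (G₁.minDegree : ℤ))
      (min (k₂ + (G₁.maxDegree : ℤ)) (k₁ + (G₂.maxDegree : ℤ)))) ≤ k) :
    IsOafFree (G₁.boxProd G₂) k
      ((S₁ ×ˢ (Set.univ : Set V₂)) ∪ ((Set.univ : Set V₁) ×ˢ S₂)) :=
  stmt15_general G₁ G₂ k₁ k₂ k S₁ S₂ h₁ h₂ hk
end
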